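/- arXiv:0907.3702 — 5 statements merged into one kernel-verified Lean document; each statement's English description precedes it below -/
import Mathlib

section
/- With σ₀ᵏ defined as (r + Σᵢ₌₁ᵏ αᵢδᵢ)/(β + Σᵢ₌₁ᵏ αᵢ²), the predator equilibrium component σⱼᵏ = αⱼσ₀ᵏ - δⱼ is strictly positive if and only if σ₀^{k-1} computed omitting predator j exceeds ℓⱼ = δⱼ/αⱼ; that is, αⱼσ₀ᵏ - δⱼ > 0 iff (r + Σ_{i≠j, i≤k} αᵢδᵢ)/(β + Σ_{i≠j, i≤k} αᵢ²) > δⱼ/αⱼ. -/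
open Finset

/-- With `σ₀ᵏ = (r + ∑ᵢ αᵢδᵢ)/(β + ∑ᵢ αᵢ²)`, the predator equilibrium
component `σⱼᵏ = αⱼ σ₀ᵏ - δⱼ` is strictly positive iff the prey equilibrium density
computed omitting predator `j` exceeds the characteristic ratio `ℓⱼ = δⱼ/αⱼ`. -/
theorem predator_component_pos_iff (k : ℕ) (β r : ℝ) (α δ : ℕ → ℝ)
    (hβ : 1 < β) (hr : r = β - 1)
    (hα : ∀ i, 0 < α i) (hδ : ∀ i, 0 < δ i)
    (j : ℕ) (hj : j ∈ range k) :
    (let σ₀ : ℝ := (r + ∑ i ∈ range k, α i * δ i) / (β + ∑ i ∈ range k, (α i) ^ 2)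
     α j * σ₀ - δ j > 0 ↔
       (r + ∑ i ∈ (range k).erase j, α i * δ i) /
           (β + ∑ i ∈ (range k).erase j, (α i) ^ 2) > δ j / α j) := by
  intro σ₀
  have hS : ∑ i ∈ range k, α i * δ i
      = α j * δ j + ∑ i ∈ (range k).erase j, α i * δ i :=
    (Finset.add_sum_erase _ _ hj).symm
  have hQ : ∑ i ∈ range k, (α i) ^ 2
      = (α j) ^ 2 + ∑ i ∈ (range k).erase j, (α i) ^ 2 :=
    (Finset.add_sum_erase _ _ hj).symm
  have hQ'nonneg : 0 ≤ ∑ i ∈ (range k).erase j, (α i) ^ 2 :=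
    Finset.sum_nonneg fun i _ => sq_nonneg _
  have hβ0 : (0:ℝ) < β := by linarith
  have hden' : 0 < β + ∑ i ∈ (range k).erase j, (α i) ^ 2 := by linarith
  have hden : 0 < β + ∑ i ∈ range k, (α i) ^ 2 := by
    have := sq_nonneg (α j); rw [hQ]; linarith
  have hαj := hα j
  simp only [σ₀, gt_iff_lt, sub_pos]
  rw [← mul_div_assoc, lt_div_iff₀ hden, div_lt_div_iff₀ hαj hden']
  rw [hS, hQ]
  constructor <;> intro h <;> nlinarith [h, sq_nonneg (α j)]
end

section
/- Suppose predators x₁,...,x_k with parameters (αⱼ,δⱼ) are ordered by increasing characteristic ratios ℓⱼ = δⱼ/αⱼ. Then the equilibrium component σ_kᵏ = α_kσ₀ᵏ - δ_k is positive if and only if βℓ_k + Σⱼ₌₁ᵏ αⱼ²(ℓ_k - ℓⱼ) < r; moreover, if this inequality holds, then σⱼᵏ > 0 for all j ≤ k. -/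
open Finset

/-- Lemma `translaw`: if predators `1,…,k` are ordered by increasing
characteristic ratios `ℓⱼ = δⱼ/αⱼ`, then `σₖᵏ = αₖ σ₀ᵏ - δₖ > 0` iff
`β ℓₖ + ∑ⱼ αⱼ² (ℓₖ - ℓⱼ) < r`; and if this inequality holds then `σⱼᵏ > 0` for
all `j ≤ k`.  (Predators are indexed by `0,…,k-1` here, so `ℓₖ` is `ℓ (k-1)`.) -/
theorem translaw (k : ℕ) (hk : 1 ≤ k) (β r : ℝ) (α δ : ℕ → ℝ)
    (hβ : 1 < β) (hr : r = β - 1)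
    (hα : ∀ i, 0 < α i) (hδ : ∀ i, 0 < δ i)
    (hord : ∀ i j, i ≤ j → j < k → δ i / α i ≤ δ j / α j) :
    (let ℓ : ℕ → ℝ := fun j => δ j / α j
     let σ₀ : ℝ := (r + ∑ i ∈ range k, α i * δ i) / (β + ∑ i ∈ range k, (α i) ^ 2)
     (α (k - 1) * σ₀ - δ (k - 1) > 0 ↔
        β * ℓ (k - 1) + ∑ j ∈ range k, (α j) ^ 2 * (ℓ (k - 1) - ℓ j) < r) ∧
     (β * ℓ (k - 1) + ∑ j ∈ range k, (α j) ^ 2 * (ℓ (k - 1) - ℓ j) < r →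
        ∀ j ∈ range k, α j * σ₀ - δ j > 0)) := by
  intro ℓ σ₀
  have hsnn : (0:ℝ) ≤ ∑ i ∈ range k, (α i)^2 :=
    Finset.sum_nonneg fun i _ => sq_nonneg _
  have hD : 0 < β + ∑ i ∈ range k, (α i)^2 := by linarith
  have hsum : ∑ i ∈ range k, α i * δ i = ∑ i ∈ range k, (α i)^2 * ℓ i := by
    refine Finset.sum_congr rfl fun i _ => ?_
    have h := (hα i).ne'
    simp only [ℓ]
    field_simp
  have hsub : ∑ j ∈ range k, (α j) ^ 2 * (ℓ (k - 1) - ℓ j)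
      = ℓ (k-1) * ∑ j ∈ range k, (α j)^2 - ∑ j ∈ range k, (α j)^2 * ℓ j := by
    rw [Finset.mul_sum, ← Finset.sum_sub_distrib]
    exact Finset.sum_congr rfl fun j _ => by ring
  have hmain : ∀ j, ℓ j < σ₀ ↔
      β * ℓ j + ∑ i ∈ range k, (α i)^2 * (ℓ j - ℓ i) < r := by
    intro j
    have hsubj : ∑ i ∈ range k, (α i) ^ 2 * (ℓ j - ℓ i)
        = ℓ j * ∑ i ∈ range k, (α i)^2 - ∑ i ∈ range k, (α i)^2 * ℓ i := by
      rw [Finset.mul_sum, ← Finset.sum_sub_distrib]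
      exact Finset.sum_congr rfl fun i _ => by ring
    rw [show σ₀ = (r + ∑ i ∈ range k, α i * δ i) / (β + ∑ i ∈ range k, (α i) ^ 2) from rfl,
      lt_div_iff₀ hD, hsum, hsubj]
    constructor <;> intro h <;> nlinarith
  have hσ : ∀ j, α j * σ₀ - δ j = α j * (σ₀ - ℓ j) := by
    intro j
    have h := (hα j).ne'
    have : α j * ℓ j = δ j := by simp only [ℓ]; field_simp
    rw [mul_sub, this]
  constructor
  · rw [hσ (k-1)]
    constructor
    · intro h
      have hpos : 0 < σ₀ - ℓ (k-1) := by
        by_contra hc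
        push_neg at hc
        nlinarith [hα (k-1)]
      exact (hmain (k-1)).mp (by linarith)
    · intro h
      have := (hmain (k-1)).mpr h
      have := hα (k-1)
      nlinarith
  · intro h j hj
    rw [Finset.mem_range] at hj
    have hjk : ℓ j ≤ ℓ (k-1) :=
      hord j (k-1) (Nat.le_sub_one_of_lt hj) (Nat.sub_lt (by omega) one_pos)
    have h1 := (hmain (k-1)).mpr h
    rw [hσ j]
    have := hα j
    nlinarith
end

section
/- Let σ = (σ₀ᵏ, σ₁ᵏ, ..., σ_kᵏ, 0, ..., 0) be the equilibrium of the one-prey N-predator Lotka-Volterra system with positive components exactly for predators 1,...,k, where predators are ordered by increasing characteristic ratios and k is the largest index satisfying the coexistence condition. Then V(u, v₁,...,v_N) = u - σ₀ᵏ log u + Σᵢ₌₁ᵏ (vᵢ - σᵢᵏ log vᵢ) + Σᵢ₌ₖ₊₁ᴺ vᵢ satisfies dV/dt = -β(u - σ₀ᵏ)² - Σᵢ₌₁ᵏ (vᵢ - σᵢᵏ)² - Σᵢ₌ₖ₊₁ᴺ vᵢ(δᵢ - αᵢσ₀ᵏ) - Σᵢ₌ₖ₊₁ᴺ vᵢ²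 along solutions, which is ≤ 0 and equals 0 only at σ. -/
open Finset Real

set_option maxHeartbeats 1600000 in
/-- Lyapunov function: for the one-prey `N`-predator system
`du/dt = u(r - βu - ∑ⱼ αⱼvⱼ)`, `dvⱼ/dt = vⱼ(αⱼu - δⱼ - vⱼ)` with predators
ordered by increasing characteristic ratios and `k` the largest index satisfying
the coexistence condition (so that `σⱼᵏ > 0` for `j < k` and `ℓᵢ > σ₀ᵏ` for
`i ≥ k`), the function
`V = u - σ₀ log u + ∑_{i<k} (vᵢ - σᵢ log vᵢ) + ∑_{k ≤ i < N} vᵢ`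
has derivative along solutions
`dV/dt = -β(u-σ₀)² - ∑_{i<k}(vᵢ-σᵢ)² - ∑_{k≤i<N} vᵢ(δᵢ-αᵢσ₀) - ∑_{k≤i<N} vᵢ²`,
which is `≤ 0` and `= 0` only at the equilibrium `σ`. -/
theorem lyapunov_derivative (N k : ℕ) (hkN : k ≤ N) (β r : ℝ) (α δ : ℕ → ℝ)
    (hβ : 1 < β) (hr : r = β - 1) (hα : ∀ i, 0 < α i) (hδ : ∀ i, 0 < δ i)
    (u : ℝ → ℝ) (v : ℕ → ℝ → ℝ) (t : ℝ)
    (hu : 0 < u t) (hv : ∀ i, i < N → 0 < v i t)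
    (hode_u : HasDerivAt u (u t * (r - β * u t - ∑ j ∈ range N, α j * v j t)) t)
    (hode_v : ∀ j, j < N → HasDerivAt (v j) (v j t * (α j * u t - δ j - v j t)) t)
    (σ₀ : ℝ)
    (hσ₀ : σ₀ = (r + ∑ i ∈ range k, α i * δ i) / (β + ∑ i ∈ range k, (α i) ^ 2))
    (hσpos : ∀ j ∈ range k, α j * σ₀ - δ j > 0)
    (hsat : ∀ i, k ≤ i → i < N → σ₀ < δ i / α i) :
    (let σ : ℕ → ℝ := fun j => α j * σ₀ - δ j
     let V : ℝ → ℝ := fun s => u s - σ₀ * Real.log (u s)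
        + ∑ i ∈ range k, (v i s - σ i * Real.log (v i s)) + ∑ i ∈ Ico k N, v i s
     let D : ℝ := -β * (u t - σ₀) ^ 2 - ∑ i ∈ range k, (v i t - σ i) ^ 2
        - ∑ i ∈ Ico k N, v i t * (δ i - α i * σ₀) - ∑ i ∈ Ico k N, (v i t) ^ 2
     HasDerivAt V D t ∧ D ≤ 0 ∧
     (D = 0 ↔ u t = σ₀ ∧ (∀ i ∈ range k, v i t = σ i) ∧ ∀ i ∈ Ico k N, v i t = 0)) := by
  intro σ V D
  have hβ0 : (0:ℝ) < β := lt_trans one_pos hβ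
  -- positivity of δ i - α i * σ₀ for i in Ico k N
  have hpos2 : ∀ i ∈ Ico k N, 0 < δ i - α i * σ₀ := by
    intro i hi
    rw [Finset.mem_Ico] at hi
    have h := hsat i hi.1 hi.2
    rw [lt_div_iff₀ (hα i)] at h
    nlinarith [hα i]
  -- key algebraic identity from hσ₀
  have hden : (0:ℝ) < β + ∑ i ∈ range k, (α i) ^ 2 := by
    have : (0:ℝ) ≤ ∑ i ∈ range k, (α i) ^ 2 :=
      Finset.sum_nonneg fun i _ => sq_nonneg _
    linarith
  have key : σ₀ * (β + ∑ i ∈ range k, (α i) ^ 2) = r + ∑ i ∈ range k, α i * δ i := by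
    rw [hσ₀, div_mul_cancel₀ _ hden.ne']
  -- split of the full interaction sum
  have hsplit : ∑ j ∈ range N, α j * v j t
      = ∑ j ∈ range k, α j * v j t + ∑ j ∈ Ico k N, α j * v j t := by
    rw [Finset.range_eq_Ico, ← Finset.sum_Ico_consecutive _ (Nat.zero_le k) hkN, Finset.range_eq_Ico]
  -- derivative of prey part
  have h1 : HasDerivAt (fun s => u s - σ₀ * Real.log (u s))
      ((u t - σ₀) * (r - β * u t - ∑ j ∈ range N, α j * v j t)) t := by
    have := hode_u.fun_sub ((hode_u.log hu.ne').const_mul σ₀)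
    refine this.congr_deriv ?_
    rw [mul_div_cancel_left₀ _ hu.ne']
    ring
  -- derivative of each interior predator part
  have h2 : ∀ i ∈ range k, HasDerivAt (fun s => v i s - σ i * Real.log (v i s))
      ((v i t - σ i) * (α i * u t - δ i - v i t)) t := by
    intro i hi
    have hiN : i < N := lt_of_lt_of_le (Finset.mem_range.mp hi) hkN
    have hvi := hv i hiN
    have := (hode_v i hiN).fun_sub (((hode_v i hiN).log hvi.ne').const_mul (σ i))
    refine this.congr_deriv ?_
    rw [mul_div_cancel_left₀ _ hvi.ne']
    ring
  -- derivative of V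
  have hV : HasDerivAt V
      ((u t - σ₀) * (r - β * u t - ∑ j ∈ range N, α j * v j t)
        + ∑ i ∈ range k, (v i t - σ i) * (α i * u t - δ i - v i t)
        + ∑ i ∈ Ico k N, v i t * (α i * u t - δ i - v i t)) t := by
    apply HasDerivAt.add
    · exact h1.add (HasDerivAt.fun_sum h2)
    · exact HasDerivAt.fun_sum fun i hi =>
        hode_v i (Finset.mem_Ico.mp hi).2
  -- the sum identities for the algebraic rewriting
  have hS1 : ∑ i ∈ range k, (v i t - σ i) * (α i * u t - δ i - v i t)
      + ∑ i ∈ range k, (v i t - σ i) ^ 2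
      = (∑ i ∈ range k, α i * v i t - ∑ i ∈ range k, α i * σ i) * (u t - σ₀) := by
    rw [sub_mul, Finset.sum_mul, Finset.sum_mul, ← Finset.sum_add_distrib,
      ← Finset.sum_sub_distrib]
    refine Finset.sum_congr rfl fun i _ => ?_
    simp only [σ]
    ring
  have hS2 : ∑ i ∈ Ico k N, v i t * (α i * u t - δ i - v i t)
      + ∑ i ∈ Ico k N, v i t * (δ i - α i * σ₀)
      + ∑ i ∈ Ico k N, (v i t) ^ 2
      = (∑ i ∈ Ico k N, α i * v i t) * (u t - σ₀) := by
    rw [Finset.sum_mul, ← Finset.sum_add_distrib, ← Finset.sum_add_distrib]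
    refine Finset.sum_congr rfl fun i _ => ?_
    ring
  have hCσ : ∑ i ∈ range k, α i * σ i
      = σ₀ * (∑ i ∈ range k, (α i) ^ 2) - ∑ i ∈ range k, α i * δ i := by
    rw [Finset.mul_sum, ← Finset.sum_sub_distrib]
    refine Finset.sum_congr rfl fun i _ => ?_
    simp only [σ]
    ring
  have hED : (u t - σ₀) * (r - β * u t - ∑ j ∈ range N, α j * v j t)
        + ∑ i ∈ range k, (v i t - σ i) * (α i * u t - δ i - v i t)
        + ∑ i ∈ Ico k N, v i t * (α i * u t - δ i - v i t) = D := by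
    show _ = -β * (u t - σ₀) ^ 2 - ∑ i ∈ range k, (v i t - σ i) ^ 2
        - ∑ i ∈ Ico k N, v i t * (δ i - α i * σ₀) - ∑ i ∈ Ico k N, (v i t) ^ 2
    rw [hsplit]
    linear_combination hS1 + hS2 - (u t - σ₀) * hCσ - (u t - σ₀) * key
  have hVD : HasDerivAt V D t := hED ▸ hV
  -- nonnegativity facts
  have hA : (0:ℝ) ≤ β * (u t - σ₀) ^ 2 := mul_nonneg hβ0.le (sq_nonneg _)
  have hB : (0:ℝ) ≤ ∑ i ∈ range k, (v i t - σ i) ^ 2 :=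
    Finset.sum_nonneg fun i _ => sq_nonneg _
  have hC : (0:ℝ) ≤ ∑ i ∈ Ico k N, v i t * (δ i - α i * σ₀) :=
    Finset.sum_nonneg fun i hi =>
      mul_nonneg (hv i (Finset.mem_Ico.mp hi).2).le (hpos2 i hi).le
  have hDq : (0:ℝ) ≤ ∑ i ∈ Ico k N, (v i t) ^ 2 :=
    Finset.sum_nonneg fun i _ => sq_nonneg _
  have hDdef : D = -β * (u t - σ₀) ^ 2 - ∑ i ∈ range k, (v i t - σ i) ^ 2
        - ∑ i ∈ Ico k N, v i t * (δ i - α i * σ₀) - ∑ i ∈ Ico k N, (v i t) ^ 2 := rfl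
  refine ⟨hVD, by rw [hDdef]; nlinarith, ?_⟩
  constructor
  · intro hD0
    rw [hDdef] at hD0
    have hA0 : β * (u t - σ₀) ^ 2 = 0 := by nlinarith
    have hB0 : ∑ i ∈ range k, (v i t - σ i) ^ 2 = 0 := by nlinarith
    have hC0 : ∑ i ∈ Ico k N, (v i t) ^ 2 = 0 := by nlinarith
    refine ⟨?_, ?_, ?_⟩
    · have : (u t - σ₀) ^ 2 = 0 := by
        rcases mul_eq_zero.mp hA0 with h | h
        · exact absurd h hβ0.ne'
        · exact h
      have := sq_eq_zero_iff.mp this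
      linarith
    · intro i hi
      have := (Finset.sum_eq_zero_iff_of_nonneg fun j _ => sq_nonneg (v j t - σ j)).mp hB0 i hi
      have := sq_eq_zero_iff.mp this
      linarith
    · intro i hi
      have := (Finset.sum_eq_zero_iff_of_nonneg fun j _ => sq_nonneg (v j t)).mp hC0 i hi
      exact sq_eq_zero_iff.mp this
  · rintro ⟨h₁, h₂, h₃⟩
    rw [hDdef, h₁]
    have e1 : ∑ i ∈ range k, (v i t - σ i) ^ 2 = 0 :=
      Finset.sum_eq_zero fun i hi => by rw [h₂ i hi]; ring
    have e2 : ∑ i ∈ Ico k N, v i t * (δ i - α i * σ₀) = 0 :=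
      Finset.sum_eq_zero fun i hi => by rw [h₃ i hi]; ring
    have e3 : ∑ i ∈ Ico k N, (v i t) ^ 2 = 0 :=
      Finset.sum_eq_zero fun i hi => by rw [h₃ i hi]; ring
    rw [e1, e2, e3]
    ring
end

section
/- Define Λ(x) = -(sup_{θ>0}{θx - φ(θ)} + 1) with φ(θ) = (e^θ - e^{-θ})/(2θ). Then Λ(0) = 0 and Λ is strictly decreasing on [0,∞); consequently there exist unique a, b > 0 with Λ(a) = -1 and Λ(b) = -1 + b, and b < a. -/
open Real Set

/-! Auxiliary hyperbolic inequalities -/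

private lemma aux_cosh_one_lt_two : Real.cosh 1 < 2 := by
  rw [Real.cosh_eq]
  nlinarith [Real.exp_one_lt_d9, Real.exp_lt_one_iff.2 (by norm_num : (-1:ℝ) < 0),
    Real.exp_pos (-1:ℝ)]

private lemma aux_cosh_quad {x : ℝ} (hx : 0 ≤ x) : 1 + x^2/2 ≤ Real.cosh x := by
  have h : MonotoneOn (fun x => Real.cosh x - 1 - x^2/2) (Ici 0) := by
    apply monotoneOn_of_deriv_nonneg (convex_Ici 0)
    · fun_prop
    · fun_prop
    · intro x hx
      rw [interior_Ici, mem_Ioi] at hx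
      have h1 : HasDerivAt (fun x : ℝ => Real.cosh x - 1 - x^2/2) (Real.sinh x - x) x := by
        have := ((Real.hasDerivAt_cosh x).sub_const 1).sub
          ((hasDerivAt_pow 2 x).div_const 2)
        exact this.congr_deriv (by ring_nf)
      rw [h1.deriv, sub_nonneg]
      exact le_of_lt ((Real.self_lt_sinh_iff).2 hx)
  have := h self_mem_Ici hx hx
  simp only [Real.cosh_zero] at this
  nlinarith [this]

private lemma aux_sinh_cubic {x : ℝ} (hx : 0 ≤ x) : x + x^3/6 ≤ Real.sinh x := by
  have h : MonotoneOn (fun x => Real.sinh x - x - x^3/6) (Ici 0) := by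
    apply monotoneOn_of_deriv_nonneg (convex_Ici 0)
    · fun_prop
    · fun_prop
    · intro x hx
      rw [interior_Ici, mem_Ioi] at hx
      have h1 : HasDerivAt (fun x : ℝ => Real.sinh x - x - x^3/6)
          (Real.cosh x - 1 - x^2/2) x := by
        have := (((Real.hasDerivAt_sinh x).sub (hasDerivAt_id x)).sub
          ((hasDerivAt_pow 3 x).div_const 6))
        exact this.congr_deriv (by ring_nf)
      rw [h1.deriv]
      nlinarith [aux_cosh_quad hx.le]
  have := h self_mem_Ici hx hx
  simp only [Real.sinh_zero] at this
  nlinarith [this]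

private lemma aux_sinh_le {x : ℝ} (hx : 0 ≤ x) : Real.sinh x ≤ x * Real.cosh x := by
  have h : MonotoneOn (fun x => x * Real.cosh x - Real.sinh x) (Ici 0) := by
    apply monotoneOn_of_deriv_nonneg (convex_Ici 0)
    · fun_prop
    · fun_prop
    · intro x hx
      rw [interior_Ici, mem_Ioi] at hx
      have h1 : HasDerivAt (fun x : ℝ => x * Real.cosh x - Real.sinh x)
          (x * Real.sinh x) x := by
        have := ((hasDerivAt_id x).mul (Real.hasDerivAt_cosh x)).sub (Real.hasDerivAt_sinh x)
        exact this.congr_deriv (by simp [id])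
      rw [h1.deriv]
      exact mul_nonneg hx.le (Real.sinh_nonneg_iff.2 hx.le)
  have := h self_mem_Ici hx hx
  simp only [Real.sinh_zero] at this
  nlinarith [this]

private lemma aux_cosh_le {x : ℝ} (hx : 0 ≤ x) : Real.cosh x ≤ 1 + x * Real.sinh x := by
  have h : MonotoneOn (fun x => 1 + x * Real.sinh x - Real.cosh x) (Ici 0) := by
    apply monotoneOn_of_deriv_nonneg (convex_Ici 0)
    · fun_prop
    · fun_prop
    · intro x hx
      rw [interior_Ici, mem_Ioi] at hx
      have h1 : HasDerivAt (fun x : ℝ => 1 + x * Real.sinh x - Real.cosh x)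
          (x * Real.cosh x) x := by
        have := (((hasDerivAt_id x).mul (Real.hasDerivAt_sinh x)).const_add 1).sub
          (Real.hasDerivAt_cosh x)
        exact this.congr_deriv (by simp [id])
      rw [h1.deriv]
      exact mul_nonneg hx.le (Real.cosh_pos x).le
  have := h self_mem_Ici hx hx
  simp only [Real.cosh_zero] at this
  nlinarith [this]

/-! The Legendre-type function -/

private noncomputable def phiR (θ : ℝ) : ℝ := (Real.exp θ - Real.exp (-θ)) / (2 * θ)

private lemma phiR_eq {θ : ℝ} (hθ : θ ≠ 0) : phiR θ = Real.sinh θ / θ := by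
  rw [phiR, Real.sinh_eq]
  field_simp

private def SR (x : ℝ) : Set ℝ := {y : ℝ | ∃ θ > 0, y = θ * x - phiR θ}

private noncomputable def fR (x : ℝ) : ℝ := sSup (SR x)

private lemma SR_nonempty (x : ℝ) : (SR x).Nonempty :=
  ⟨1 * x - phiR 1, 1, one_pos, rfl⟩

private lemma phiR_lb {θ : ℝ} (hθ : 0 < θ) : 1 + θ^2/6 ≤ phiR θ := by
  rw [phiR_eq hθ.ne', le_div_iff₀ hθ]
  nlinarith [aux_sinh_cubic hθ.le]

private lemma phiR_ub {θ : ℝ} (hθ : 0 < θ) (hθ1 : θ ≤ 1) : phiR θ ≤ 1 + 2 * θ^2 := by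
  rw [phiR_eq hθ.ne', div_le_iff₀ hθ]
  have h1 : Real.sinh θ ≤ θ * Real.cosh θ := aux_sinh_le hθ.le
  have h2 : Real.cosh θ ≤ 1 + θ * Real.sinh θ := aux_cosh_le hθ.le
  have h3 : Real.cosh θ ≤ Real.cosh 1 := by
    rw [Real.cosh_le_cosh]
    rw [abs_of_nonneg hθ.le, abs_one]; exact hθ1
  have h4 : Real.cosh 1 < 2 := aux_cosh_one_lt_two
  have h5 : Real.sinh θ ≤ 2 * θ := by nlinarith
  have h6 : θ * Real.sinh θ ≤ 2 * θ^2 := by nlinarith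
  nlinarith [sq_nonneg θ, mul_le_mul_of_nonneg_left h6 hθ.le]

private lemma SR_bddAbove (x : ℝ) : BddAbove (SR x) := by
  refine ⟨3 * x^2 / 2 - 1, ?_⟩
  rintro y ⟨θ, hθ, rfl⟩
  have h1 : 1 + θ^2/6 ≤ phiR θ := phiR_lb hθ
  have h2 : θ * x ≤ θ * |x| := mul_le_mul_of_nonneg_left (le_abs_self x) hθ.le
  nlinarith [sq_nonneg (θ - 3 * |x|), sq_abs x]

private lemma fR_upper {x θ : ℝ} (hθ : 0 < θ) : θ * x - phiR θ ≤ fR x :=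
  le_csSup (SR_bddAbove x) ⟨θ, hθ, rfl⟩

private lemma fR_zero : fR 0 = -1 := by
  apply le_antisymm
  · apply csSup_le (SR_nonempty 0)
    rintro y ⟨θ, hθ, rfl⟩
    have := phiR_lb hθ
    nlinarith
  · by_contra h
    push_neg at h
    set ε := -1 - fR 0 with hε
    have hεpos : 0 < ε := by simp [hε]; linarith
    set θ := min 1 (Real.sqrt ε / 2) with hθdef
    have hθpos : 0 < θ := lt_min one_pos (by positivity)
    have hθ1 : θ ≤ 1 := min_le_left _ _
    have hθs : θ ≤ Real.sqrt ε / 2 := min_le_right _ _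
    have hsq : θ^2 ≤ ε / 4 := by
      have h2 : θ^2 ≤ (Real.sqrt ε / 2)^2 := by
        apply sq_le_sq' <;> nlinarith [Real.sqrt_nonneg ε]
      have : (Real.sqrt ε / 2)^2 = ε / 4 := by
        rw [div_pow, Real.sq_sqrt hεpos.le]; norm_num
      linarith
    have hub : phiR θ ≤ 1 + 2 * θ^2 := phiR_ub hθpos hθ1
    have := fR_upper (x := 0) hθpos
    nlinarith

private lemma fR_gt_neg_one {x : ℝ} (hx : 0 < x) : -1 < fR x := by
  set θ := min 1 (x / 4) with hθdef
  have hθpos : 0 < θ := lt_min one_pos (by positivity)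
  have hθ1 : θ ≤ 1 := min_le_left _ _
  have hθx : θ ≤ x / 4 := min_le_right _ _
  have hub : phiR θ ≤ 1 + 2 * θ^2 := phiR_ub hθpos hθ1
  have := fR_upper (x := x) hθpos
  nlinarith

private lemma fR_convex : ConvexOn ℝ univ fR := by
  refine ⟨convex_univ, ?_⟩
  intro x _ y _ a b ha hb hab
  apply csSup_le (SR_nonempty _)
  rintro z ⟨θ, hθ, rfl⟩
  have h1 : θ * x - phiR θ ≤ fR x := fR_upper hθ
  have h2 : θ * y - phiR θ ≤ fR y := fR_upper hθ
  have hb' : b = 1 - a := by linarith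
  have heq : θ * (a • x + b • y) - phiR θ = a * (θ * x - phiR θ) + b * (θ * y - phiR θ) := by
    simp only [smul_eq_mul, hb']; ring
  rw [heq]
  simp only [smul_eq_mul]
  exact add_le_add (mul_le_mul_of_nonneg_left h1 ha) (mul_le_mul_of_nonneg_left h2 hb)

private lemma fR_cont : Continuous fR := by
  rw [← continuousOn_univ]
  exact fR_convex.continuousOn isOpen_univ

private lemma fR_strictMonoOn : StrictMonoOn fR (Ici 0) := by
  intro x hx y hy hxy
  rw [mem_Ici] at hx hy
  have hy0 : 0 < y := lt_of_le_of_lt hx hxy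
  rcases eq_or_lt_of_le hx with h | h
  · rw [← h, fR_zero]; exact fR_gt_neg_one hy0
  · set t := x / y with ht
    have ht0 : 0 < t := by positivity
    have ht1 : t < 1 := (div_lt_one hy0).2 hxy
    have hx_eq : x = (1 - t) • (0:ℝ) + t • y := by
      simp [smul_eq_mul, ht]
      field_simp
    have := fR_convex.2 (mem_univ (0:ℝ)) (mem_univ y) (by linarith : (0:ℝ) ≤ 1 - t)
      ht0.le (by ring)
    rw [← hx_eq] at this
    simp only [smul_eq_mul, fR_zero] at this
    have hgt : -1 < fR y := fR_gt_neg_one hy0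
    calc fR x ≤ (1 - t) * (-1) + t * fR y := this
    _ < (1 - t) * fR y + t * fR y := by nlinarith
    _ = fR y := by ring

private lemma fR_lb (x : ℝ) : x - Real.sinh 1 ≤ fR x := by
  have := fR_upper (x := x) one_pos
  have h1 : phiR 1 = Real.sinh 1 := by rw [phiR_eq one_ne_zero]; simp
  linarith [this, h1 ▸ this]

private lemma fR_exists_root : ∃ a : ℝ, 0 < a ∧ fR a = 0 := by
  have hs : (0:ℝ) < Real.sinh 1 := Real.sinh_pos_iff.2 one_pos
  have h1 : fR 0 ≤ 0 := by rw [fR_zero]; norm_num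
  have h2 : (0:ℝ) ≤ fR (Real.sinh 1) := by linarith [fR_lb (Real.sinh 1)]
  obtain ⟨a, ha, hfa⟩ := intermediate_value_Icc hs.le fR_cont.continuousOn
    (mem_Icc.2 ⟨h1, h2⟩)
  refine ⟨a, ?_, hfa⟩
  rcases eq_or_lt_of_le ha.1 with h | h
  · exfalso; rw [← h, fR_zero] at hfa; norm_num at hfa
  · exact h

private lemma gR_exists_root : ∃ b : ℝ, 0 < b ∧ fR b + b = 0 := by
  have hs : (0:ℝ) < Real.sinh 1 := Real.sinh_pos_iff.2 one_pos
  have h1 : fR 0 + 0 ≤ 0 := by rw [fR_zero]; norm_num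
  have h2 : (0:ℝ) ≤ fR (Real.sinh 1) + Real.sinh 1 := by linarith [fR_lb (Real.sinh 1)]
  obtain ⟨b, hb, hfb⟩ := intermediate_value_Icc hs.le
    (fR_cont.add continuous_id).continuousOn (mem_Icc.2 ⟨h1, h2⟩)
  simp only [Pi.add_apply, id] at hfb
  refine ⟨b, ?_, hfb⟩
  rcases eq_or_lt_of_le hb.1 with h | h
  · exfalso; rw [← h, fR_zero] at hfb; norm_num at hfb
  · exact h

/-- with `φ(θ) = (e^θ - e^{-θ})/(2θ)` (the mgf of a uniform `[-1,1]`
random variable) and `Λ(x) = -(sup_{θ>0} {θx - φ(θ)} + 1)`, we have `Λ(0) = 0`,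
`Λ` is strictly decreasing on `[0,∞)`, and there are unique `a, b > 0` with
`Λ(a) = -1`, `Λ(b) = -1 + b`, and moreover `b < a`. -/
theorem rate_function_properties :
    (let φ : ℝ → ℝ := fun θ => (Real.exp θ - Real.exp (-θ)) / (2 * θ)
     let Λ : ℝ → ℝ := fun x => -(sSup {y : ℝ | ∃ θ > 0, y = θ * x - φ θ} + 1)
     Λ 0 = 0 ∧ StrictAntiOn Λ (Ici 0) ∧
     (∃! a : ℝ, 0 < a ∧ Λ a = -1) ∧
     (∃! b : ℝ, 0 < b ∧ Λ b = -1 + b) ∧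
     ∀ a b : ℝ, (0 < a ∧ Λ a = -1) → (0 < b ∧ Λ b = -1 + b) → b < a) := by
  show (fun x : ℝ => -(fR x + 1)) 0 = 0 ∧
    StrictAntiOn (fun x : ℝ => -(fR x + 1)) (Ici 0) ∧
    (∃! a : ℝ, 0 < a ∧ -(fR a + 1) = -1) ∧
    (∃! b : ℝ, 0 < b ∧ -(fR b + 1) = -1 + b) ∧
    ∀ a b : ℝ, (0 < a ∧ -(fR a + 1) = -1) → (0 < b ∧ -(fR b + 1) = -1 + b) → b < a
  have key_a : ∀ a : ℝ, (-(fR a + 1) = -1) ↔ fR a = 0 := by intro a; constructor <;> intro h <;> linarith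
  have key_b : ∀ b : ℝ, (-(fR b + 1) = -1 + b) ↔ fR b + b = 0 := by
    intro b; constructor <;> intro h <;> linarith
  have hlt : ∀ a b : ℝ, (0 < a ∧ fR a = 0) → (0 < b ∧ fR b + b = 0) → b < a := by
    rintro a b ⟨ha, hfa⟩ ⟨hb, hfb⟩
    by_contra h
    push_neg at h
    have := fR_strictMonoOn.monotoneOn (mem_Ici.2 ha.le) (mem_Ici.2 hb.le) h
    linarith
  refine ⟨by simp [fR_zero], ?_, ?_, ?_, ?_⟩
  · intro x hx y hy hxy
    simp only [neg_lt_neg_iff, add_lt_add_iff_right]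
    exact fR_strictMonoOn hx hy hxy
  · obtain ⟨a, ha, hfa⟩ := fR_exists_root
    refine ⟨a, ⟨ha, (key_a a).2 hfa⟩, ?_⟩
    rintro a' ⟨ha', hfa'⟩
    rw [key_a a'] at hfa'
    exact fR_strictMonoOn.injOn (mem_Ici.2 ha'.le) (mem_Ici.2 ha.le) (by rw [hfa', hfa])
  · obtain ⟨b, hb, hfb⟩ := gR_exists_root
    refine ⟨b, ⟨hb, (key_b b).2 hfb⟩, ?_⟩
    rintro b' ⟨hb', hfb'⟩
    rw [key_b b'] at hfb'
    by_contra hne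
    rcases lt_or_gt_of_ne hne with h | h
    · have := fR_strictMonoOn (mem_Ici.2 hb'.le) (mem_Ici.2 hb.le) h
      linarith
    · have := fR_strictMonoOn (mem_Ici.2 hb.le) (mem_Ici.2 hb'.le) h
      linarith
  · rintro a b ⟨ha, hfa⟩ ⟨hb, hfb⟩
    exact hlt a b ⟨ha, (key_a a).1 hfa⟩ ⟨hb, (key_b b).1 hfb⟩
end

section
/- With B_M as the sum of independent exponentials with rates 1,...,M, the ratio sup_M B_M/E[B_M] has finite second moment, and B_M/E[B_M] → 1 in probability as M → ∞. -/
open MeasureTheory ProbabilityTheory Finset Real Filter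
open scoped ENNReal NNReal

lemma aux_integrable {r : ℝ} (hr : 0 < r) (n : ℕ) :
    IntegrableOn (fun x : ℝ => x ^ n * (r * rexp (-(r * x)))) (Set.Ioi 0) := by
  have h := integrableOn_rpow_mul_exp_neg_mul_rpow (s := (n:ℝ)) (p := 1)
    (by linarith [Nat.cast_nonneg (α:=ℝ) n]) one_pos hr
  have h2 : IntegrableOn (fun x : ℝ => x ^ (n:ℝ) * rexp (-r * x ^ (1:ℝ))) (Set.Ioi 0) := h
  have h3 : IntegrableOn (fun x : ℝ => x ^ n * rexp (-(r * x))) (Set.Ioi 0) := by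
    refine h2.congr_fun (fun x hx => ?_) measurableSet_Ioi
    dsimp only
    rw [Real.rpow_one, Real.rpow_natCast, neg_mul]
  have h4 : IntegrableOn (fun x : ℝ => r * (x ^ n * rexp (-(r * x)))) (Set.Ioi 0) :=
    h3.const_mul r
  exact h4.congr_fun (fun x hx => by ring) measurableSet_Ioi

lemma aux_integral {r : ℝ} (hr : 0 < r) (n : ℕ) :
    ∫ x in Set.Ioi (0:ℝ), x ^ n * (r * rexp (-(r * x))) = (Nat.factorial n : ℝ) / r ^ n := by
  have h := Real.integral_rpow_mul_exp_neg_mul_Ioi (a := (n:ℝ)+1) (r := r)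
    (by positivity) hr
  have h2 : ∫ x in Set.Ioi (0:ℝ), x ^ n * rexp (-(r * x))
      = (1 / r) ^ ((n:ℝ)+1) * Real.Gamma ((n:ℝ)+1) := by
    rw [← h]
    refine setIntegral_congr_fun measurableSet_Ioi (fun x hx => ?_)
    rw [add_sub_cancel_right, Real.rpow_natCast]
  have h3 : ∫ x in Set.Ioi (0:ℝ), x ^ n * (r * rexp (-(r * x)))
      = r * ∫ x in Set.Ioi (0:ℝ), x ^ n * rexp (-(r * x)) := by
    rw [← integral_const_mul]
    exact setIntegral_congr_fun measurableSet_Ioi (fun x hx => by ring)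
  rw [h3, h2, Real.Gamma_nat_eq_factorial,
    show ((n:ℝ)+1) = ((n+1 : ℕ) : ℝ) by push_cast; ring, Real.rpow_natCast]
  have hrn : r ^ (n+1) ≠ 0 := by positivity
  have hr0 : r ≠ 0 := hr.ne'
  field_simp
  rw [one_div, inv_pow, ← mul_inv_cancel₀ hrn]
  ring

lemma expMeasure_lintegral_pow {r : ℝ} (hr : 0 < r) {n : ℕ} (hn : 0 < n) :
    ∫⁻ x, ENNReal.ofReal (x ^ n) ∂(expMeasure r)
      = ENNReal.ofReal ((Nat.factorial n : ℝ) / r ^ n) := by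
  have hm : Measurable (gammaPDF 1 r) := (measurable_gammaPDFReal 1 r).ennreal_ofReal
  rw [expMeasure, gammaMeasure,
    lintegral_withDensity_eq_lintegral_mul _ hm (by measurability)]
  have hsplit := lintegral_add_compl
    (μ := (volume : Measure ℝ)) (gammaPDF 1 r * fun x => ENNReal.ofReal (x ^ n))
    (measurableSet_Ioi (a := (0:ℝ)))
  rw [← hsplit]
  have h2 : ∫⁻ x in (Set.Ioi (0:ℝ))ᶜ,
      (gammaPDF 1 r * fun x => ENNReal.ofReal (x ^ n)) x = 0 := by
    rw [Set.compl_Ioi]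
    have h0 : ∀ x ∈ Set.Iic (0:ℝ),
        (gammaPDF 1 r * fun x => ENNReal.ofReal (x ^ n)) x = 0 := by
      intro x hx
      rcases lt_or_eq_of_le (show x ≤ 0 from hx) with h | h
      · simp [gammaPDF_of_neg h]
      · subst h
        simp [zero_pow hn.ne']
    rw [setLIntegral_congr_fun measurableSet_Iic h0]
    simp
  rw [h2, add_zero]
  have h3 : ∀ x : ℝ, x ∈ Set.Ioi (0:ℝ) →
      (gammaPDF 1 r * fun x => ENNReal.ofReal (x ^ n)) x
        = ENNReal.ofReal (x ^ n * (r * rexp (-(r * x)))) := by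
    intro x hx
    have hx0 : (0:ℝ) ≤ x := le_of_lt hx
    have hpdf : gammaPDF 1 r x = ENNReal.ofReal (r * rexp (-(r * x))) := by
      rw [show gammaPDF 1 r x = exponentialPDF r x from rfl, exponentialPDF_of_nonneg hx0]
    simp only [Pi.mul_apply, hpdf, ← ENNReal.ofReal_mul (by positivity : (0:ℝ) ≤ r * rexp (-(r*x)))]
    rw [mul_comm]
  rw [setLIntegral_congr_fun measurableSet_Ioi h3,
    ← ofReal_integral_eq_lintegral_ofReal (aux_integrable hr n)
      ((ae_restrict_iff' measurableSet_Ioi).2 (ae_of_all _ (fun x hx => by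
        have hx0 : (0:ℝ) < x := hx
        positivity))), aux_integral hr n]

set_option maxHeartbeats 1600000 in
theorem yule_birth_time_ratio
    {Ω : Type*} [MeasurableSpace Ω] (P : Measure Ω) [IsProbabilityMeasure P]
    (ξ : ℕ → Ω → ℝ) (hmeas : ∀ i, Measurable (ξ i))
    (hlaw : ∀ i : ℕ, Measure.map (ξ i) P = expMeasure (i + 1))
    (hindep : iIndepFun ξ P)
    (B : ℕ → Ω → ℝ) (hB : ∀ M ω, B M ω = ∑ i ∈ range M, ξ i ω)
    (EB : ℕ → ℝ) (hEB : ∀ M, EB M = ∑ i ∈ range M, (1 : ℝ) / (i + 1)) :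
    (let R : Ω → ℝ := fun ω => sSup {r : ℝ | ∃ M : ℕ, 1 ≤ M ∧ r = B M ω / EB M}
     ∫⁻ ω, ENNReal.ofReal ((R ω) ^ 2) ∂P < ⊤) ∧
    ∀ ε : ℝ, 0 < ε →
      Tendsto (fun M : ℕ => P {ω | ε < |B M ω / EB M - 1|}) atTop (nhds 0) := by
  have hr : ∀ i : ℕ, (0:ℝ) < (i:ℝ) + 1 := fun i => by positivity
  -- lintegral moments
  have hlint : ∀ i : ℕ, ∀ n : ℕ, 0 < n → ∫⁻ ω, ENNReal.ofReal (ξ i ω ^ n) ∂P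
      = ENNReal.ofReal ((Nat.factorial n : ℝ) / ((i:ℝ)+1) ^ n) := by
    intro i n hn
    have h1 : ∫⁻ ω, ENNReal.ofReal (ξ i ω ^ n) ∂P
        = ∫⁻ x, ENNReal.ofReal (x ^ n) ∂(Measure.map (ξ i) P) := by
      rw [lintegral_map (by measurability) (hmeas i)]
    rw [h1, hlaw i, expMeasure_lintegral_pow (hr i) hn]
  -- a.e. nonneg
  have hpos : ∀ i : ℕ, ∀ᵐ ω ∂P, 0 ≤ ξ i ω := by
    intro i
    rw [ae_iff]
    have : {ω | ¬(0 ≤ ξ i ω)} = ξ i ⁻¹' (Set.Iio 0) := by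
      ext ω; simp [not_le]
    rw [this, ← Measure.map_apply (hmeas i) measurableSet_Iio, hlaw i,
      expMeasure, gammaMeasure, withDensity_apply _ measurableSet_Iio]
    rw [show (0:ℝ≥0∞) = ∫⁻ x in Set.Iio (0:ℝ), 0 ∂volume by simp]
    refine setLIntegral_congr_fun measurableSet_Iio (fun x hx => ?_)
    exact gammaPDF_of_neg hx
  -- MemLp 2
  have hmem : ∀ i, MemLp (ξ i) 2 P := by
    intro i
    rw [memLp_two_iff_integrable_sq (hmeas i).aestronglyMeasurable]
    refine ⟨((hmeas i).pow_const 2).aestronglyMeasurable, ?_⟩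
    rw [hasFiniteIntegral_iff_norm]
    have : ∀ ω, ENNReal.ofReal ‖ξ i ω ^ 2‖ = ENNReal.ofReal (ξ i ω ^ 2) := by
      intro ω; rw [norm_of_nonneg (sq_nonneg _)]
    rw [lintegral_congr this, hlint i 2 two_pos]
    exact ENNReal.ofReal_lt_top
  -- moments
  have hmean : ∀ i : ℕ, ∫ ω, ξ i ω ∂P = 1 / ((i:ℝ)+1) := by
    intro i
    rw [integral_eq_lintegral_of_nonneg_ae (hpos i) (hmeas i).aestronglyMeasurable]
    have := hlint i 1 one_pos
    simp only [pow_one] at this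
    rw [this, ENNReal.toReal_ofReal (by positivity)]
    simp
  have hsq : ∀ i : ℕ, ∫ ω, ξ i ω ^ 2 ∂P = 2 / ((i:ℝ)+1) ^ 2 := by
    intro i
    rw [integral_eq_lintegral_of_nonneg_ae (ae_of_all _ fun ω => sq_nonneg _)
      ((hmeas i).pow_const 2).aestronglyMeasurable, hlint i 2 two_pos,
      ENNReal.toReal_ofReal (by positivity)]
    norm_num [Nat.factorial]
  have hvar : ∀ i : ℕ, variance (ξ i) P = 1 / ((i:ℝ)+1) ^ 2 := by
    intro i
    rw [variance_eq_sub (hmem i)]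
    have h2 : (P[(ξ i) ^ 2] : ℝ) = 2 / ((i:ℝ)+1) ^ 2 := by
      rw [← hsq i]; congr 1
    rw [h2, hmean i]
    have := (hr i).ne'
    field_simp
    ring
  -- B facts
  have hBfun : ∀ M, B M = fun ω => ∑ i ∈ range M, ξ i ω := fun M => funext fun ω => hB M ω
  have hBsum : ∀ M, B M = ∑ i ∈ range M, ξ i := by
    intro M; rw [hBfun M]; ext ω; simp
  have hBmeas : ∀ M, Measurable (B M) := by
    intro M; rw [hBfun M]
    exact Finset.measurable_sum _ (fun i _ => hmeas i)
  have hBmem : ∀ M, MemLp (B M) 2 P := by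
    intro M; rw [hBsum M]; exact memLp_finset_sum' _ fun i _ => hmem i
  have hBmean : ∀ M, ∫ ω, B M ω ∂P = EB M := by
    intro M
    rw [hEB M, hBfun M,
      integral_finset_sum _ (fun i _ => (hmem i).integrable one_le_two)]
    exact Finset.sum_congr rfl fun i _ => hmean i
  have hBvar : ∀ M, variance (B M) P = ∑ i ∈ range M, 1/((i:ℝ)+1)^2 := by
    intro M
    rw [hBsum M, IndepFun.variance_sum (fun i _ => hmem i)
      (fun i _ j _ hij => hindep.indepFun hij)]
    exact Finset.sum_congr rfl fun i _ => hvar i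
  have hsum_sq : ∀ M : ℕ, 1 ≤ M → ∑ i ∈ range M, (1:ℝ)/((i:ℝ)+1)^2 ≤ 2 - 1/(M:ℝ) := by
    intro M hM
    induction M, hM using Nat.le_induction with
    | base => norm_num
    | succ n hn ih =>
      rw [Finset.sum_range_succ]
      have hn1 : (1:ℝ) ≤ (n:ℝ) := by exact_mod_cast hn
      have h1 : (0:ℝ) < n := by linarith
      have h2 : (0:ℝ) < (n:ℝ)+1 := by linarith
      have key : (1:ℝ)/((n:ℝ)+1)^2 ≤ 1/(n:ℝ) - 1/((n:ℝ)+1) := by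
        rw [div_sub_div _ _ h1.ne' h2.ne']
        rw [div_le_div_iff₀ (by positivity) (by positivity)]
        ring_nf
        nlinarith
      push_cast
      linarith
  have hvar_le : ∀ M, variance (B M) P ≤ 2 := by
    intro M
    rw [hBvar M]
    rcases Nat.eq_zero_or_pos M with h | h
    · simp [h]
    · have := hsum_sq M h
      have : (0:ℝ) ≤ 1/(M:ℝ) := by positivity
      linarith [hsum_sq M h]
  -- EB facts
  have hEB_mono : Monotone EB := by
    intro a b hab
    rw [hEB a, hEB b]
    exact Finset.sum_le_sum_of_subset_of_nonneg
      (Finset.range_subset_range.2 hab) (fun i _ _ => by positivity)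
  have hEB1 : EB 1 = 1 := by rw [hEB]; norm_num
  have hEB_ge1 : ∀ M, 1 ≤ M → 1 ≤ EB M := fun M hM => hEB1 ▸ hEB_mono hM
  have hEB_harm : ∀ M, EB M = ((harmonic M : ℚ) : ℝ) := by
    intro M; rw [hEB, harmonic]; push_cast; simp [one_div]
  have hEB_lb : ∀ M : ℕ, Real.log ((M:ℝ)+1) ≤ EB M := by
    intro M
    rw [hEB_harm]
    have := log_add_one_le_harmonic M
    push_cast at this
    exact this
  have hEB_ub : ∀ M : ℕ, EB M ≤ 1 + Real.log M := by
    intro M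
    rw [hEB_harm]
    exact harmonic_le_one_add_log M
  have hEB_top : Tendsto EB atTop atTop := by
    refine tendsto_atTop_mono hEB_lb ?_
    exact Real.tendsto_log_atTop.comp
      (tendsto_atTop_add_const_right _ 1 (tendsto_natCast_atTop_atTop (R := ℝ)))
  -- PART 2
  have part2 : ∀ ε : ℝ, 0 < ε →
      Tendsto (fun M : ℕ => P {ω | ε < |B M ω / EB M - 1|}) atTop (nhds 0) := by
    intro ε hε
    have key : ∀ M : ℕ, 1 ≤ M →
        P {ω | ε < |B M ω / EB M - 1|} ≤ ENNReal.ofReal (2 / (ε^2 * EB M ^2)) := by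
      intro M hM
      have hH : (1:ℝ) ≤ EB M := hEB_ge1 M hM
      have hH0 : (0:ℝ) < EB M := by linarith
      have hsub : {ω | ε < |B M ω / EB M - 1|} ⊆ {ω | ε * EB M ≤ |B M ω - P[B M]|} := by
        intro ω hω
        simp only [Set.mem_setOf_eq] at hω ⊢
        rw [hBmean M]
        have heq : B M ω / EB M - 1 = (B M ω - EB M) / EB M := by field_simp
        rw [heq, abs_div, abs_of_pos hH0, lt_div_iff₀ hH0] at hω
        linarith
      refine (measure_mono hsub).trans ?_
      refine (meas_ge_le_variance_div_sq (μ := P) (hBmem M)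
        (c := ε * EB M) (by positivity)).trans ?_
      apply ENNReal.ofReal_le_ofReal
      rw [mul_pow]
      exact (div_le_div_iff_of_pos_right (by positivity)).2 (hvar_le M)
    have hb : Tendsto (fun M : ℕ => ENNReal.ofReal (2 / (ε^2 * EB M^2))) atTop (nhds 0) := by
      rw [show (0:ℝ≥0∞) = ENNReal.ofReal 0 by simp]
      apply ENNReal.tendsto_ofReal
      have h2 : Tendsto (fun M : ℕ => ε^2 * EB M^2) atTop atTop := by
        apply Tendsto.const_mul_atTop (by positivity : (0:ℝ) < ε^2)
        have := hEB_top.atTop_mul_atTop₀ hEB_top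
        refine this.congr fun M => ?_
        ring
      have h3 := h2.inv_tendsto_atTop
      have h4 := h3.const_mul (2:ℝ)
      simp only [mul_zero] at h4
      refine h4.congr fun M => ?_
      rw [div_eq_mul_inv]
      rfl
    refine tendsto_of_tendsto_of_tendsto_of_le_of_le' tendsto_const_nhds hb ?_ ?_
    · exact Eventually.of_forall fun M => zero_le
    · filter_upwards [eventually_ge_atTop 1] with M hM using key M hM
  -- PART 1
  set N : ℕ → ℕ := fun k => 2^(2^k) with hN
  have hNpos : ∀ k, 1 ≤ N k := fun k => Nat.one_le_two_pow
  have hlogN : ∀ k, Real.log ((N k : ℝ)) = (2:ℝ)^k * Real.log 2 := by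
    intro k
    rw [hN]
    push_cast
    rw [Real.log_pow]
    push_cast
    ring
  have hL := Real.log_two_gt_d9
  have hNlb : ∀ k, (2:ℝ)^k * Real.log 2 ≤ EB (N k) := by
    intro k
    refine le_trans ?_ (hEB_lb (N k))
    rw [← hlogN k]
    apply Real.log_le_log (by positivity)
    linarith
  have hpow1 : ∀ k : ℕ, (1:ℝ) ≤ 2^k := fun k => one_le_pow₀ (by norm_num)
  have hNlb' : ∀ k, (2:ℝ)^k * (1/2) ≤ EB (N k) := by
    intro k
    refine le_trans ?_ (hNlb k)
    have := hpow1 k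
    nlinarith
  have hNH_pos : ∀ k, (0:ℝ) < EB (N k) := by
    intro k
    have := hNlb' k
    have h2 := hpow1 k
    nlinarith
  have hratio : ∀ k, EB (N (k+1)) ≤ 4 * EB (N k) := by
    intro k
    have h1 := hEB_ub (N (k+1))
    rw [hlogN (k+1)] at h1
    have h3 := hNlb k
    have ht := hpow1 k
    rw [pow_succ] at h1
    nlinarith
  have hcover : ∀ M : ℕ, 1 ≤ M → ∃ k, M ≤ N k ∧ EB (N k) ≤ 4 * EB M := by
    intro M hM
    have hex : ∃ k, M ≤ N k := by
      refine ⟨M, le_trans (le_of_lt ((Nat.lt_two_pow_self (n := M)))) ?_⟩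
      exact Nat.pow_le_pow_right (by norm_num) (le_of_lt ((Nat.lt_two_pow_self (n := M))))
    classical
    have hk : M ≤ N (Nat.find hex) := Nat.find_spec hex
    rcases Nat.eq_zero_or_pos (Nat.find hex) with h0 | hpos'
    · refine ⟨0, by rwa [h0] at hk, ?_⟩
      have hEB2 : EB (N 0) = 3/2 := by
        rw [hN]
        norm_num
        rw [hEB]
        rw [Finset.sum_range_succ, Finset.sum_range_succ]
        norm_num
      have := hEB_ge1 M hM
      rw [hEB2]
      linarith
    · obtain ⟨j, hj⟩ := Nat.exists_eq_succ_of_ne_zero hpos'.ne'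
      refine ⟨Nat.find hex, hk, ?_⟩
      have hmin : ¬ (M ≤ N j) := Nat.find_min hex (by omega)
      have hjM : N j ≤ M := by omega
      have h5 : EB (N j) ≤ EB M := hEB_mono hjM
      rw [hj]
      refine le_trans (hratio j) ?_
      linarith
  have hgood : ∀ᵐ ω ∂P, ∀ i, 0 ≤ ξ i ω := ae_all_iff.2 hpos
  set U : Ω → ℝ≥0∞ :=
    fun ω => ∑' k, ENNReal.ofReal ((B (N k) ω - EB (N k))^2 / EB (N k)^2) with hU
  have hUmeas : ∀ k : ℕ, Measurable
      (fun ω => ENNReal.ofReal ((B (N k) ω - EB (N k))^2 / EB (N k)^2)) := by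
    intro k
    exact ((((hBmeas (N k)).sub measurable_const).pow_const 2).div_const _).ennreal_ofReal
  have hUint : ∫⁻ ω, U ω ∂P ≤ ∑' k : ℕ, ENNReal.ofReal (8 * ((1:ℝ)/4)^k) := by
    rw [hU, lintegral_tsum (fun k => (hUmeas k).aemeasurable)]
    refine ENNReal.tsum_le_tsum fun k => ?_
    have hHpos := hNH_pos k
    calc ∫⁻ ω, ENNReal.ofReal ((B (N k) ω - EB (N k))^2 / EB (N k)^2) ∂P
        = ∫⁻ ω, ENNReal.ofReal ((B (N k) ω - EB (N k))^2) * ENNReal.ofReal (1/ EB (N k)^2) ∂P := by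
          apply lintegral_congr
          intro ω
          rw [← ENNReal.ofReal_mul (sq_nonneg _)]
          congr 1
          ring
      _ = (∫⁻ ω, ENNReal.ofReal ((B (N k) ω - EB (N k))^2) ∂P) * ENNReal.ofReal (1/EB (N k)^2) :=
          lintegral_mul_const _ (((hBmeas (N k)).sub measurable_const).pow_const 2).ennreal_ofReal
      _ = ENNReal.ofReal (variance (B (N k)) P) * ENNReal.ofReal (1/EB (N k)^2) := by
          congr 1
          rw [(hBmem (N k)).ofReal_variance_eq, evariance_eq_lintegral_ofReal, hBmean]
      _ ≤ ENNReal.ofReal 2 * ENNReal.ofReal (1/EB (N k)^2) :=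
          mul_le_mul_left (ENNReal.ofReal_le_ofReal (hvar_le _)) _
      _ = ENNReal.ofReal (2 / EB (N k)^2) := by
          rw [← ENNReal.ofReal_mul (by norm_num)]
          congr 1
          ring
      _ ≤ ENNReal.ofReal (8 * (1/4)^k) := by
          apply ENNReal.ofReal_le_ofReal
          have h1 := hNlb' k
          have h2 : (0:ℝ) < (2:ℝ)^k * (1/2) := by positivity
          have h3 : ((2:ℝ)^k * (1/2))^2 ≤ EB (N k)^2 := by nlinarith
          have h4 : (2:ℝ) / EB (N k)^2 ≤ 2 / ((2:ℝ)^k * (1/2))^2 :=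
            div_le_div_of_nonneg_left (by norm_num) (by positivity) h3
          refine h4.trans (le_of_eq ?_)
          have h5 : ((2:ℝ)^k)^2 = 4^k := by
            rw [← pow_mul, mul_comm, pow_mul]
            norm_num
          rw [mul_pow, h5]
          have h6 : (4:ℝ)^k ≠ 0 := by positivity
          field_simp
          rw [mul_right_comm, ← mul_pow]; norm_num
  have hS : ∑' k : ℕ, ENNReal.ofReal (8 * ((1:ℝ)/4)^k) < ⊤ := by
    have heq : ∀ k:ℕ, ENNReal.ofReal (8 * ((1:ℝ)/4)^k)
        = ENNReal.ofReal 8 * ENNReal.ofReal (1/4) ^ k := by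
      intro k
      rw [ENNReal.ofReal_mul (by norm_num), ENNReal.ofReal_pow (by norm_num)]
    simp_rw [heq]
    rw [ENNReal.tsum_mul_left, ENNReal.tsum_geometric]
    refine ENNReal.mul_lt_top ENNReal.ofReal_lt_top ?_
    rw [ENNReal.inv_lt_top]
    rw [tsub_pos_iff_lt]
    exact ENNReal.ofReal_lt_one.2 (by norm_num)
  have hRbound : ∀ᵐ ω ∂P,
      ENNReal.ofReal ((sSup {r : ℝ | ∃ M : ℕ, 1 ≤ M ∧ r = B M ω / EB M})^2)
        ≤ ENNReal.ofReal 32 + ENNReal.ofReal 32 * U ω := by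
    filter_upwards [hgood] with ω hω
    by_cases hUtop : U ω = ⊤
    · rw [hUtop, ENNReal.mul_top (by simp)]
      exact le_top.trans (le_of_eq (by simp))
    · obtain ⟨u, hu0, huU⟩ : ∃ u : ℝ, 0 ≤ u ∧ ENNReal.ofReal u = U ω :=
        ⟨(U ω).toReal, ENNReal.toReal_nonneg, ENNReal.ofReal_toReal hUtop⟩
      have hterm : ∀ k, (B (N k) ω - EB (N k))^2 / EB (N k)^2 ≤ u := by
        intro k
        have h1 : ENNReal.ofReal ((B (N k) ω - EB (N k))^2 / EB (N k)^2) ≤ U ω := by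
          rw [hU]
          exact ENNReal.le_tsum k
        rw [← huU] at h1
        exact (ENNReal.ofReal_le_ofReal_iff hu0).1 h1
      have hBnonneg : ∀ M, 0 ≤ B M ω := fun M => by
        rw [hB]
        exact Finset.sum_nonneg fun i _ => hω i
      have hBmono : ∀ M M' : ℕ, M ≤ M' → B M ω ≤ B M' ω := by
        intro M M' h
        rw [hB, hB]
        exact Finset.sum_le_sum_of_subset_of_nonneg (Finset.range_subset_range.2 h)
          (fun i _ _ => hω i)
      have hkey : ∀ M : ℕ, 1 ≤ M → B M ω / EB M ≤ 4 * (1 + Real.sqrt u) := by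
        intro M hM
        obtain ⟨k, hk1, hk2⟩ := hcover M hM
        have hHM : (1:ℝ) ≤ EB M := hEB_ge1 M hM
        have hHMpos : (0:ℝ) < EB M := by linarith
        have hHNpos := hNH_pos k
        have hsqb : (B (N k) ω - EB (N k))^2 ≤ u * EB (N k)^2 := by
          have h := hterm k
          rw [div_le_iff₀ (by positivity)] at h
          linarith
        have hsu := Real.sq_sqrt hu0
        have hsn := Real.sqrt_nonneg u
        have hle : B (N k) ω ≤ EB (N k) * (1 + Real.sqrt u) := by
          nlinarith [sq_nonneg (B (N k) ω - EB (N k) + Real.sqrt u * EB (N k)),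
            mul_nonneg hsn hHNpos.le]
        calc B M ω / EB M ≤ B (N k) ω / EB M :=
              (div_le_div_iff_of_pos_right hHMpos).2 (hBmono M (N k) hk1)
          _ ≤ (4 * EB M * (1 + Real.sqrt u)) / EB M := by
              refine (div_le_div_iff_of_pos_right hHMpos).2 ?_
              refine hle.trans ?_
              have h7 : (0:ℝ) ≤ 1 + Real.sqrt u := by linarith
              nlinarith
          _ = 4 * (1 + Real.sqrt u) := by
              field_simp
      have hb0 : (0:ℝ) ≤ 4 * (1 + Real.sqrt u) := by
        have := Real.sqrt_nonneg u
        linarith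
      have hub : ∀ r ∈ {r : ℝ | ∃ M : ℕ, 1 ≤ M ∧ r = B M ω / EB M},
          r ≤ 4 * (1 + Real.sqrt u) := by
        rintro r ⟨M, hM, rfl⟩
        exact hkey M hM
      have hsup_le : sSup {r : ℝ | ∃ M : ℕ, 1 ≤ M ∧ r = B M ω / EB M}
          ≤ 4 * (1 + Real.sqrt u) := Real.sSup_le hub hb0
      have hsup_nonneg : 0 ≤ sSup {r : ℝ | ∃ M : ℕ, 1 ≤ M ∧ r = B M ω / EB M} := by
        have hmem1 : B 1 ω / EB 1 ∈ {r : ℝ | ∃ M : ℕ, 1 ≤ M ∧ r = B M ω / EB M} :=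
          ⟨1, le_rfl, rfl⟩
        have h01 : 0 ≤ B 1 ω / EB 1 := by
          rw [hEB1]
          simpa using hBnonneg 1
        exact le_trans h01 (le_csSup ⟨4 * (1 + Real.sqrt u), hub⟩ hmem1)
      have hR2 : (sSup {r : ℝ | ∃ M : ℕ, 1 ≤ M ∧ r = B M ω / EB M})^2 ≤ 32 + 32 * u := by
        nlinarith [Real.sq_sqrt hu0, Real.sqrt_nonneg u, sq_nonneg (Real.sqrt u - 1)]
      calc ENNReal.ofReal ((sSup {r : ℝ | ∃ M : ℕ, 1 ≤ M ∧ r = B M ω / EB M})^2)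
          ≤ ENNReal.ofReal (32 + 32 * u) := ENNReal.ofReal_le_ofReal hR2
        _ = ENNReal.ofReal 32 + ENNReal.ofReal (32 * u) :=
            ENNReal.ofReal_add (by norm_num) (by positivity)
        _ = ENNReal.ofReal 32 + ENNReal.ofReal 32 * ENNReal.ofReal u := by
            rw [ENNReal.ofReal_mul (by norm_num)]
        _ = ENNReal.ofReal 32 + ENNReal.ofReal 32 * U ω := by
            rw [huU]
  have part1 : ∫⁻ ω, ENNReal.ofReal
      ((sSup {r : ℝ | ∃ M : ℕ, 1 ≤ M ∧ r = B M ω / EB M})^2) ∂P < ⊤ := by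
    calc (∫⁻ ω, ENNReal.ofReal
        ((sSup {r : ℝ | ∃ M : ℕ, 1 ≤ M ∧ r = B M ω / EB M})^2) ∂P)
        ≤ ∫⁻ ω, (ENNReal.ofReal 32 + ENNReal.ofReal 32 * U ω) ∂P :=
          lintegral_mono_ae hRbound
      _ = ENNReal.ofReal 32 * P Set.univ + ENNReal.ofReal 32 * ∫⁻ ω, U ω ∂P := by
          rw [lintegral_add_left measurable_const,
            lintegral_const, lintegral_const_mul' _ _ ENNReal.ofReal_ne_top]
      _ < ⊤ := by
          refine ENNReal.add_lt_top.2 ⟨?_, ?_⟩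
          · exact ENNReal.mul_lt_top ENNReal.ofReal_lt_top (measure_lt_top _ _)
          · exact ENNReal.mul_lt_top ENNReal.ofReal_lt_top (lt_of_le_of_lt hUint hS)
  exact ⟨part1, part2⟩
end
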